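/- arXiv:2507.11318 — 2 statements merged into one kernel-verified Lean document; each statement's English description precedes it below -/
import Mathlib

section
/- Let M ≥ 0 with M < 2. Then the bilinear form a(φ,ψ) = ∫₀¹ φ′ψ′ dZ + M ∫₀¹ Z φ′ ψ dZ is coercive on V_Z with coercivity constant (1 − M/2), and hence for every f ∈ L²(0,1) there exists a unique ψ ∈ V_Z solving a(ψ,φ) = ∫₀¹ fφ dZ for all φ ∈ V_Z. -/
open MeasureTheory intervalIntegral Set



lemma cs_interval (u : ℝ → ℝ) (hu : Continuous u) {a b : ℝ} (hab : a ≤ b) :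
    (∫ x in a..b, u x)^2 ≤ (b - a) * ∫ x in a..b, (u x)^2 := by
  set A : ℝ → ℝ := fun t => ∫ x in a..t, u x with hA
  set B : ℝ → ℝ := fun t => ∫ x in a..t, (u x)^2 with hB
  set K : ℝ → ℝ := fun t => (t - a) * B t - (A t)^2 with hK
  have hAd : ∀ t, HasDerivAt A (u t) t := fun t => (hu.integral_hasStrictDerivAt a t).hasDerivAt
  have hBd : ∀ t, HasDerivAt B ((u t)^2) t := fun t =>
    ((hu.pow 2).integral_hasStrictDerivAt a t).hasDerivAt
  have hKd : ∀ t, HasDerivAt K (B t + (t - a) * (u t)^2 - 2 * A t * u t) t := by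
    intro t
    have h1 : HasDerivAt (fun t => (t - a) * B t) (1 * B t + (t - a) * (u t)^2) t :=
      ((hasDerivAt_id t).sub_const a).mul (hBd t)
    have h2 : HasDerivAt (fun t => (A t)^2) (2 * A t * u t) t := by
      have := (hAd t).pow 2
      change HasDerivAt (A ^ 2) _ t
      simpa [mul_comm, mul_assoc, mul_left_comm] using this
    change HasDerivAt ((fun t => (t - a) * B t) - fun t => (A t)^2) _ t
    simpa [one_mul] using h1.sub h2
  have hKnonneg : ∀ t, a ≤ t → 0 ≤ B t + (t - a) * (u t)^2 - 2 * A t * u t := by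
    intro t hat
    have key : ∫ x in a..t, (u x - u t)^2 = B t - 2 * u t * A t + (t - a) * (u t)^2 := by
      have e1 : ∀ x, (u x - u t)^2 = (u x)^2 - (2 * u t) * u x + (u t)^2 := by intro x; ring
      rw [intervalIntegral.integral_congr (g := fun x => (u x)^2 - (2 * u t) * u x + (u t)^2)
        (fun x _ => e1 x)]
      rw [intervalIntegral.integral_add (f := fun x => (u x)^2 - (2 * u t) * u x) (g := fun _ => (u t)^2) (((hu.pow 2).sub ((continuous_const.mul hu))).intervalIntegrable a t)
        (continuous_const.intervalIntegrable a t),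
        intervalIntegral.integral_sub (f := fun x => (u x)^2) (g := fun x => (2 * u t) * u x) ((hu.pow 2).intervalIntegrable a t)
          ((continuous_const.mul hu).intervalIntegrable a t),
        intervalIntegral.integral_const_mul, intervalIntegral.integral_const]
      simp [hA, hB, smul_eq_mul]
      try ring
    have h0 : 0 ≤ ∫ x in a..t, (u x - u t)^2 :=
      intervalIntegral.integral_nonneg hat (fun x _ => sq_nonneg _)
    rw [key] at h0
    linarith
  have hmono : MonotoneOn K (Icc a b) := by
    apply monotoneOn_of_deriv_nonneg (convex_Icc a b)
    · exact (Continuous.continuousOn (by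
        have : Continuous K := by
          apply Continuous.sub
          · exact (continuous_id.sub continuous_const).mul
              (intervalIntegral.continuous_primitive (fun c d => (hu.pow 2).intervalIntegrable c d) a)
          · exact ((intervalIntegral.continuous_primitive (fun c d => hu.intervalIntegrable c d) a).pow 2)
        exact this))
    · intro t ht
      exact ((hKd t).differentiableAt).differentiableWithinAt
    · intro t ht
      rw [interior_Icc] at ht
      rw [(hKd t).deriv]
      exact hKnonneg t (le_of_lt ht.1)
  have hKa : K a = 0 := by simp [hK, hA, hB]
  have := hmono (left_mem_Icc.2 hab) (right_mem_Icc.2 hab) hab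
  rw [hKa] at this
  have : 0 ≤ (b - a) * B b - (A b)^2 := this
  linarith

lemma poincare_pt (φ : ℝ → ℝ) (hφ : ContDiff ℝ 1 φ) (hφ1 : φ 1 = 0) {Z : ℝ}
    (hZ : Z ∈ Set.Icc (0:ℝ) 1) : (φ Z)^2 ≤ ∫ x in (0:ℝ)..1, (deriv φ x)^2 := by
  have hd : Differentiable ℝ φ := hφ.differentiable one_ne_zero
  have hdc : Continuous (deriv φ) := hφ.continuous_deriv le_rfl
  have hftc : ∫ x in Z..1, deriv φ x = φ 1 - φ Z :=
    intervalIntegral.integral_deriv_eq_sub (fun x _ => hd x)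
      (hdc.intervalIntegrable Z 1)
  have h1 : (φ Z)^2 = (∫ x in Z..1, deriv φ x)^2 := by rw [hftc, hφ1]; ring
  have h2 := cs_interval (deriv φ) hdc hZ.2
  have h3 : (1 - Z) * (∫ x in Z..1, (deriv φ x)^2) ≤ ∫ x in (0:ℝ)..1, (deriv φ x)^2 := by
    have hsplit : (∫ x in (0:ℝ)..Z, (deriv φ x)^2) + ∫ x in Z..1, (deriv φ x)^2
        = ∫ x in (0:ℝ)..1, (deriv φ x)^2 :=
      intervalIntegral.integral_add_adjacent_intervals
        ((hdc.pow 2).intervalIntegrable 0 Z) ((hdc.pow 2).intervalIntegrable Z 1)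
    have h4 : (0:ℝ) ≤ ∫ x in (0:ℝ)..Z, (deriv φ x)^2 :=
      intervalIntegral.integral_nonneg hZ.1 (fun x _ => sq_nonneg _)
    have h5 : (0:ℝ) ≤ ∫ x in Z..1, (deriv φ x)^2 :=
      intervalIntegral.integral_nonneg hZ.2 (fun x _ => sq_nonneg _)
    nlinarith [mul_nonneg hZ.1 h5]
  calc (φ Z)^2 = (∫ x in Z..1, deriv φ x)^2 := h1
    _ ≤ (1 - Z) * ∫ x in Z..1, (deriv φ x)^2 := h2
    _ ≤ ∫ x in (0:ℝ)..1, (deriv φ x)^2 := h3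



lemma zphi_eq (φ : ℝ → ℝ) (hφ : ContDiff ℝ 1 φ) (hφ1 : φ 1 = 0) :
    ∫ Z in (0:ℝ)..1, Z * deriv φ Z * φ Z = -(1/2) * ∫ Z in (0:ℝ)..1, (φ Z)^2 := by
  have hd : Differentiable ℝ φ := hφ.differentiable one_ne_zero
  have hdc : Continuous (deriv φ) := hφ.continuous_deriv le_rfl
  have hc : Continuous φ := hφ.continuous
  have hv : ∀ x : ℝ, HasDerivAt (fun x => (φ x)^2) (2 * φ x * deriv φ x) x := by
    intro x
    have := (hd x).hasDerivAt.pow 2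
    change HasDerivAt (φ ^ 2) _ x
    simpa [mul_comm, mul_assoc, mul_left_comm] using this
  have hibp := intervalIntegral.integral_mul_deriv_eq_deriv_mul (a := (0:ℝ)) (b := 1)
    (u := fun x : ℝ => x) (u' := fun _ : ℝ => (1:ℝ)) (v := fun x => (φ x)^2)
    (v' := fun x => 2 * φ x * deriv φ x)
    (fun x _ => hasDerivAt_id x)
    (fun x _ => hv x)
    (intervalIntegrable_const)
    (((continuous_const.mul hc).mul hdc).intervalIntegrable 0 1)
  have h2 : ∫ x in (0:ℝ)..1, x * (2 * φ x * deriv φ x)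
      = 2 * ∫ Z in (0:ℝ)..1, Z * deriv φ Z * φ Z := by
    rw [← intervalIntegral.integral_const_mul]
    apply intervalIntegral.integral_congr
    intro x _; ring
  have h3 : ∫ x in (0:ℝ)..1, 1 * (φ x)^2 = ∫ x in (0:ℝ)..1, (φ x)^2 := by
    apply intervalIntegral.integral_congr; intro x _; ring
  rw [h2, h3] at hibp
  simp only [hφ1] at hibp
  norm_num at hibp
  linarith

lemma coercive (M : ℝ) (hM0 : 0 ≤ M) (φ : ℝ → ℝ) (hφ : ContDiff ℝ 1 φ) (hφ1 : φ 1 = 0) :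
    (∫ Z in (0:ℝ)..1, deriv φ Z * deriv φ Z)
        + M * ∫ Z in (0:ℝ)..1, Z * deriv φ Z * φ Z
      ≥ (1 - M/2) * ∫ Z in (0:ℝ)..1, (deriv φ Z)^2 := by
  have hc : Continuous φ := hφ.continuous
  have h1 : ∫ Z in (0:ℝ)..1, deriv φ Z * deriv φ Z = ∫ Z in (0:ℝ)..1, (deriv φ Z)^2 := by
    apply intervalIntegral.integral_congr; intro x _; ring
  have h2 := zphi_eq φ hφ hφ1
  have h3 : ∫ Z in (0:ℝ)..1, (φ Z)^2 ≤ ∫ Z in (0:ℝ)..1, (deriv φ Z)^2 := by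
    have hconst : ∫ Z in (0:ℝ)..1, (fun _ => ∫ x in (0:ℝ)..1, (deriv φ x)^2) Z
        = ∫ x in (0:ℝ)..1, (deriv φ x)^2 := by
      rw [intervalIntegral.integral_const]; simp
    calc ∫ Z in (0:ℝ)..1, (φ Z)^2
        ≤ ∫ Z in (0:ℝ)..1, (fun _ => ∫ x in (0:ℝ)..1, (deriv φ x)^2) Z := by
          apply intervalIntegral.integral_mono_on zero_le_one
            ((hc.pow 2).intervalIntegrable 0 1) (intervalIntegrable_const)
          intro x hx; exact poincare_pt φ hφ hφ1 hx
      _ = _ := hconst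
  have h4 : (0:ℝ) ≤ ∫ Z in (0:ℝ)..1, (φ Z)^2 :=
    intervalIntegral.integral_nonneg zero_le_one (fun x _ => sq_nonneg _)
  rw [h1, h2]
  nlinarith [mul_nonneg hM0 (sub_nonneg.2 h3)]


lemma ibp_primitive (q : ℝ → ℝ) (hqm : Measurable q) (hqi : Integrable q)
    (Φ Φ' : ℝ → ℝ) (hΦ : ∀ x, HasDerivAt Φ (Φ' x) x) (hΦ'c : Continuous Φ')
    (hΦ1 : Φ 1 = 0) :
    ∫ x in (0:ℝ)..1, (∫ s in (0:ℝ)..x, q s) * Φ' x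
      = -∫ s in (0:ℝ)..1, q s * Φ s := by
  set μ := volume.restrict (Ioc (0:ℝ) 1) with hμ
  have hΦc : Continuous Φ := by
    have : Differentiable ℝ Φ := fun x => (hΦ x).differentiableAt
    exact this.continuous
  -- Step 1: rewrite the LHS as a double integral over μ × μ
  have step1 : ∫ x in (0:ℝ)..1, (∫ s in (0:ℝ)..x, q s) * Φ' x
      = ∫ x, (∫ s, (Ioc (0:ℝ) x).indicator q s * Φ' x ∂μ) ∂μ := by
    rw [intervalIntegral.integral_of_le zero_le_one]
    apply setIntegral_congr_ae measurableSet_Ioc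
    filter_upwards with x hx
    have h1 : ∫ s in (0:ℝ)..x, q s = ∫ s, (Ioc (0:ℝ) x).indicator q s ∂μ := by
      rw [intervalIntegral.integral_of_le (le_of_lt hx.1), hμ,
        setIntegral_indicator measurableSet_Ioc]
      congr 1
      rw [Set.inter_eq_right.2 (Set.Ioc_subset_Ioc le_rfl hx.2)]
    rw [h1, ← MeasureTheory.integral_mul_const]
  -- Integrability on the product
  have hE : MeasurableSet {p : ℝ × ℝ | 0 < p.2 ∧ p.2 ≤ p.1} := by
    apply MeasurableSet.inter
    · exact measurableSet_lt measurable_const measurable_snd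
    · exact measurableSet_le measurable_snd measurable_fst
  have hFeq : ∀ p : ℝ × ℝ, (Ioc (0:ℝ) p.1).indicator q p.2 * Φ' p.1
      = ({p : ℝ × ℝ | 0 < p.2 ∧ p.2 ≤ p.1}.indicator (fun p => q p.2) p) * Φ' p.1 := by
    intro p
    by_cases h : p.2 ∈ Ioc (0:ℝ) p.1
    · rw [Set.indicator_of_mem h, Set.indicator_of_mem (by exact h)]
    · rw [Set.indicator_of_notMem h, Set.indicator_of_notMem (by exact h)]
  have hFint : Integrable (fun p : ℝ × ℝ =>
      (Ioc (0:ℝ) p.1).indicator q p.2 * Φ' p.1) (μ.prod μ) := by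
    have hmeas : AEStronglyMeasurable (fun p : ℝ × ℝ =>
        (Ioc (0:ℝ) p.1).indicator q p.2 * Φ' p.1) (μ.prod μ) := by
      have : Measurable (fun p : ℝ × ℝ =>
          ({p : ℝ × ℝ | 0 < p.2 ∧ p.2 ≤ p.1}.indicator (fun p => q p.2) p) * Φ' p.1) :=
        (((hqm.comp measurable_snd).indicator hE).mul
          (hΦ'c.measurable.comp measurable_fst))
      have := this.aestronglyMeasurable (μ := μ.prod μ)
      exact this.congr (by filter_upwards with p using (hFeq p).symm)
    have hmaj : Integrable (fun p : ℝ × ℝ => |q p.2| * |Φ' p.1|) (μ.prod μ) := by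
      have h1 : Integrable (fun x : ℝ => |Φ' x|) μ :=
        (hΦ'c.abs.integrableOn_Ioc)
      have h2 : Integrable (fun s : ℝ => |q s|) μ := hqi.abs.restrict
      simpa [mul_comm] using h1.mul_prod h2
    apply hmaj.mono' hmeas
    filter_upwards with p
    have : |(Ioc (0:ℝ) p.1).indicator q p.2| ≤ |q p.2| := by
      rw [← Real.norm_eq_abs, ← Real.norm_eq_abs]
      exact norm_indicator_le_norm_self q p.2
    calc ‖(Ioc (0:ℝ) p.1).indicator q p.2 * Φ' p.1‖
        = |(Ioc (0:ℝ) p.1).indicator q p.2| * |Φ' p.1| := by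
          rw [Real.norm_eq_abs, abs_mul]
      _ ≤ |q p.2| * |Φ' p.1| := by
          apply mul_le_mul_of_nonneg_right this (abs_nonneg _)
  -- Step 2: swap
  have step2 : ∫ x, (∫ s, (Ioc (0:ℝ) x).indicator q s * Φ' x ∂μ) ∂μ
      = ∫ s, (∫ x, (Ioc (0:ℝ) x).indicator q s * Φ' x ∂μ) ∂μ :=
    integral_integral_swap hFint
  -- Step 3: inner integral
  have step3 : ∫ s, (∫ x, (Ioc (0:ℝ) x).indicator q s * Φ' x ∂μ) ∂μ
      = ∫ s, -(q s * Φ s) ∂μ := by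
    apply MeasureTheory.integral_congr_ae
    filter_upwards [ae_restrict_mem measurableSet_Ioc] with s hs
    have hinner : ∀ x : ℝ, (Ioc (0:ℝ) x).indicator q s * Φ' x
        = (Ici s).indicator (fun x => q s * Φ' x) x := by
      intro x
      by_cases h : s ≤ x
      · rw [Set.indicator_of_mem (Set.mem_Ioc.2 ⟨hs.1, h⟩),
          Set.indicator_of_mem (Set.mem_Ici.2 h)]
      · rw [Set.indicator_of_notMem (fun hc => h (Set.mem_Ioc.1 hc).2),
          Set.indicator_of_notMem (fun hc => h (Set.mem_Ici.1 hc)), zero_mul]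
    rw [MeasureTheory.integral_congr_ae (Filter.Eventually.of_forall hinner)]
    rw [hμ, setIntegral_indicator measurableSet_Ici]
    have hset : Ioc (0:ℝ) 1 ∩ Ici s = Icc s 1 := by
      ext x
      simp only [Set.mem_inter_iff, Set.mem_Ioc, Set.mem_Ici, Set.mem_Icc]
      constructor
      · rintro ⟨⟨_, hx1⟩, hsx⟩; exact ⟨hsx, hx1⟩
      · rintro ⟨hsx, hx1⟩; exact ⟨⟨lt_of_lt_of_le hs.1 hsx, hx1⟩, hsx⟩
    rw [hset, ← Measure.restrict_congr_set Ioc_ae_eq_Icc]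
    have : ∫ x in Ioc s 1, q s * Φ' x = q s * (Φ 1 - Φ s) := by
      rw [← intervalIntegral.integral_of_le hs.2, intervalIntegral.integral_const_mul]
      congr 1
      exact intervalIntegral.integral_eq_sub_of_hasDerivAt (fun x _ => hΦ x)
        (hΦ'c.intervalIntegrable s 1)
    rw [this, hΦ1]
    ring
  rw [step1, step2, step3, MeasureTheory.integral_neg, intervalIntegral.integral_of_le zero_le_one]


/-- The bilinear form a(φ,ψ) = ∫₀¹ φ'ψ' + M ∫₀¹ Z φ' ψ is coercive on V_Z with
    constant (1 − M/2) when 0 ≤ M < 2, and for every f ∈ L²(0,1) there is a unique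
    ψ ∈ V_Z solving a(ψ,φ) = ∫₀¹ f φ for all φ ∈ V_Z. -/
theorem lax_milgram_VZ (M : ℝ) (hM0 : 0 ≤ M) (hM2 : M < 2) :
    (∀ φ : ℝ → ℝ, ContDiff ℝ 1 φ → φ 1 = 0 →
      (∫ Z in (0:ℝ)..1, deriv φ Z * deriv φ Z)
          + M * ∫ Z in (0:ℝ)..1, Z * deriv φ Z * φ Z
        ≥ (1 - M/2) * ∫ Z in (0:ℝ)..1, (deriv φ Z)^2)
    ∧ (∀ f : ℝ → ℝ, MeasureTheory.MemLp f 2 (MeasureTheory.volume.restrict (Set.Ioo (0:ℝ) 1)) →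
        ∃ ψ : ℝ → ℝ,
          (ContDiff ℝ 1 ψ ∧ ψ 1 = 0 ∧
            ∀ φ : ℝ → ℝ, ContDiff ℝ 1 φ → φ 1 = 0 →
              (∫ Z in (0:ℝ)..1, deriv ψ Z * deriv φ Z)
                  + M * ∫ Z in (0:ℝ)..1, Z * deriv ψ Z * φ Z
                = ∫ Z in (0:ℝ)..1, f Z * φ Z)
          ∧ ∀ ψ' : ℝ → ℝ,
              (ContDiff ℝ 1 ψ' ∧ ψ' 1 = 0 ∧
                ∀ φ : ℝ → ℝ, ContDiff ℝ 1 φ → φ 1 = 0 →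
                  (∫ Z in (0:ℝ)..1, deriv ψ' Z * deriv φ Z)
                      + M * ∫ Z in (0:ℝ)..1, Z * deriv ψ' Z * φ Z
                    = ∫ Z in (0:ℝ)..1, f Z * φ Z)
              → Set.EqOn ψ ψ' (Set.Icc 0 1)) := by
  constructor
  · intro φ hφ hφ1
    exact coercive M hM0 φ hφ hφ1
  · intro f hf
    -- measurable representative of f on (0,1)
    have hmeas := hf.aestronglyMeasurable
    set f₂ : ℝ → ℝ := hmeas.mk f with hf₂def
    have hf₂m : StronglyMeasurable f₂ := hmeas.stronglyMeasurable_mk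
    have hfae : f =ᵐ[volume.restrict (Set.Ioo (0:ℝ) 1)] f₂ := hmeas.ae_eq_mk
    haveI : IsFiniteMeasure (volume.restrict (Set.Ioo (0:ℝ) 1)) := by
      constructor
      rw [Measure.restrict_apply_univ, Real.volume_Ioo]
      exact ENNReal.ofReal_lt_top
    have hfint : IntegrableOn f (Set.Ioo (0:ℝ) 1) := hf.integrable one_le_two
    have hf₂int : IntegrableOn f₂ (Set.Ioo (0:ℝ) 1) := hfint.congr hfae
    set f₀ : ℝ → ℝ := (Set.Ioo (0:ℝ) 1).indicator f₂ with hf₀def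
    have hf₀m : Measurable f₀ := hf₂m.measurable.indicator measurableSet_Ioo
    have hf₀i : Integrable f₀ := (integrable_indicator_iff measurableSet_Ioo).2 hf₂int
    -- the weight and the solution
    set q : ℝ → ℝ := fun s => Real.exp (-(M * s^2) / 2) * f₀ s with hqdef
    have hexpc : Continuous fun s : ℝ => Real.exp (-(M * s^2) / 2) := by continuity
    have hqm : Measurable q := hexpc.measurable.mul hf₀m
    have hqi : Integrable q := by
      apply hf₀i.bdd_mul (c := 1) hexpc.aestronglyMeasurable
      refine Filter.Eventually.of_forall (fun s => ?_)
      rw [Real.norm_eq_abs, abs_of_pos (Real.exp_pos _)]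
      apply Real.exp_le_one_iff.2
      have : 0 ≤ M * s^2 := mul_nonneg hM0 (sq_nonneg s)
      linarith
    set G : ℝ → ℝ := fun x => ∫ s in (0:ℝ)..x, q s with hGdef
    have hGc : Continuous G := hqi.continuous_primitive 0
    set e : ℝ → ℝ := fun Z => Real.exp (M * Z^2 / 2) with hedef
    have hec : Continuous e :=
      Real.continuous_exp.comp ((continuous_const.mul (continuous_pow 2)).div_const 2)
    have hed : ∀ Z, HasDerivAt e (e Z * (M * Z)) Z := by
      intro Z
      have h1 : HasDerivAt (fun Z : ℝ => M * Z^2 / 2) (M * Z) Z := by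
        have := ((hasDerivAt_pow 2 Z).const_mul M).div_const 2
        refine this.congr_deriv ?_
        push_cast
        ring
      exact h1.exp
    set g : ℝ → ℝ := fun Z => -(e Z * G Z) with hgdef
    have hgc : Continuous g := (hec.mul hGc).neg
    set ψ : ℝ → ℝ := fun Z => ∫ t in (1:ℝ)..Z, g t with hψdef
    have hψd : ∀ Z, HasDerivAt ψ (g Z) Z := fun Z =>
      (hgc.integral_hasStrictDerivAt 1 Z).hasDerivAt
    have hψderiv : deriv ψ = g := funext fun Z => (hψd Z).deriv
    have hψC1 : ContDiff ℝ 1 ψ := contDiff_one_iff_deriv.2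
      ⟨fun Z => (hψd Z).differentiableAt, hψderiv ▸ hgc⟩
    have hψ1 : ψ 1 = 0 := intervalIntegral.integral_same
    -- the weak formulation holds for ψ
    have hweak : ∀ φ : ℝ → ℝ, ContDiff ℝ 1 φ → φ 1 = 0 →
        (∫ Z in (0:ℝ)..1, deriv ψ Z * deriv φ Z)
            + M * ∫ Z in (0:ℝ)..1, Z * deriv ψ Z * φ Z
          = ∫ Z in (0:ℝ)..1, f Z * φ Z := by
      intro φ hφ hφ1
      have hφd : Differentiable ℝ φ := hφ.differentiable one_ne_zero
      have hφc : Continuous φ := hφ.continuous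
      have hφdc : Continuous (deriv φ) := hφ.continuous_deriv le_rfl
      set Φ : ℝ → ℝ := fun Z => e Z * φ Z with hΦdef
      set Φ' : ℝ → ℝ := fun Z => e Z * (M * Z * φ Z + deriv φ Z) with hΦ'def
      have hΦd : ∀ Z, HasDerivAt Φ (Φ' Z) Z := by
        intro Z
        have := (hed Z).mul (hφd Z).hasDerivAt
        refine this.congr_deriv ?_
        rw [hΦ'def]
        ring
      have hΦ'c : Continuous Φ' := by
        apply hec.mul
        exact ((continuous_const.mul continuous_id).mul hφc).add hφdc
      have hΦ1 : Φ 1 = 0 := by rw [hΦdef]; simp [hφ1]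
      rw [hψderiv]
      have hI1 : IntervalIntegrable (fun Z => g Z * deriv φ Z) volume 0 1 :=
        (hgc.mul hφdc).intervalIntegrable 0 1
      have hI2 : IntervalIntegrable (fun Z => M * (Z * g Z * φ Z)) volume 0 1 := by
        apply Continuous.intervalIntegrable
        exact continuous_const.mul (((continuous_id.mul hgc).mul hφc))
      have lhs1 : (∫ Z in (0:ℝ)..1, g Z * deriv φ Z)
          + M * ∫ Z in (0:ℝ)..1, Z * g Z * φ Z
          = ∫ Z in (0:ℝ)..1, (g Z * deriv φ Z + M * (Z * g Z * φ Z)) := by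
        rw [← intervalIntegral.integral_const_mul,
          ← intervalIntegral.integral_add hI1 hI2]
      have lhs2 : ∫ Z in (0:ℝ)..1, (g Z * deriv φ Z + M * (Z * g Z * φ Z))
          = ∫ Z in (0:ℝ)..1, -(G Z * Φ' Z) := by
        apply intervalIntegral.integral_congr
        intro Z _
        rw [hgdef, hΦ'def]
        ring
      have lhs3 : ∫ Z in (0:ℝ)..1, -(G Z * Φ' Z) = -∫ Z in (0:ℝ)..1, G Z * Φ' Z :=
        intervalIntegral.integral_neg
      have hibp := ibp_primitive q hqm hqi Φ Φ' hΦd hΦ'c hΦ1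
      have lhs4 : -∫ Z in (0:ℝ)..1, G Z * Φ' Z = ∫ s in (0:ℝ)..1, q s * Φ s := by
        rw [hGdef] at *
        rw [hibp, neg_neg]
      have step5 : ∫ s in (0:ℝ)..1, q s * Φ s = ∫ s in (0:ℝ)..1, f₀ s * φ s := by
        apply intervalIntegral.integral_congr
        intro s _
        have hexp : Real.exp (-(M * s^2) / 2) * Real.exp (M * s^2 / 2) = 1 := by
          have h0 : -(M * s^2) / 2 + M * s^2 / 2 = 0 := by ring
          rw [← Real.exp_add, h0, Real.exp_zero]
        rw [hqdef, hΦdef, hedef]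
        calc Real.exp (-(M * s^2) / 2) * f₀ s * (Real.exp (M * s^2 / 2) * φ s)
            = (Real.exp (-(M * s^2) / 2) * Real.exp (M * s^2 / 2)) * (f₀ s * φ s) := by
              ring
          _ = f₀ s * φ s := by rw [hexp, one_mul]
      have step6 : ∫ Z in (0:ℝ)..1, f Z * φ Z = ∫ Z in (0:ℝ)..1, f₀ Z * φ Z := by
        rw [intervalIntegral.integral_of_le zero_le_one,
          intervalIntegral.integral_of_le zero_le_one,
          ← Measure.restrict_congr_set Ioo_ae_eq_Ioc]
        apply MeasureTheory.integral_congr_ae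
        filter_upwards [hfae, ae_restrict_mem measurableSet_Ioo] with Z h1 h2
        rw [hf₀def, Set.indicator_of_mem h2, h1]
      rw [lhs1, lhs2, lhs3, lhs4, step5, step6]
    refine ⟨ψ, ⟨hψC1, hψ1, hweak⟩, ?_⟩
    -- uniqueness
    rintro ψ' ⟨hψ'C1, hψ'1, hweak'⟩
    have hψ'd : Differentiable ℝ ψ' := hψ'C1.differentiable one_ne_zero
    have hψ'dc : Continuous (deriv ψ') := hψ'C1.continuous_deriv le_rfl
    have hψdiff : Differentiable ℝ ψ := hψC1.differentiable one_ne_zero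
    set w : ℝ → ℝ := fun Z => ψ Z - ψ' Z with hwdef
    have hwC1 : ContDiff ℝ 1 w := hψC1.sub hψ'C1
    have hw1 : w 1 = 0 := by rw [hwdef]; simp [hψ1, hψ'1]
    have hwc : Continuous w := hwC1.continuous
    have hwdc : Continuous (deriv w) := hwC1.continuous_deriv le_rfl
    have hwd : ∀ Z, deriv w Z = deriv ψ Z - deriv ψ' Z := by
      intro Z
      rw [hwdef]
      exact deriv_sub (hψdiff Z) (hψ'd Z)
    have e1 := hweak w hwC1 hw1
    have e2 := hweak' w hwC1 hw1
    have hgc' : Continuous (deriv ψ) := hψderiv ▸ hgc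
    have azero : (∫ Z in (0:ℝ)..1, deriv w Z * deriv w Z)
        + M * ∫ Z in (0:ℝ)..1, Z * deriv w Z * w Z = 0 := by
      have s1 : ∫ Z in (0:ℝ)..1, deriv w Z * deriv w Z
          = (∫ Z in (0:ℝ)..1, deriv ψ Z * deriv w Z)
            - ∫ Z in (0:ℝ)..1, deriv ψ' Z * deriv w Z := by
        rw [← intervalIntegral.integral_sub (f := fun Z => deriv ψ Z * deriv w Z) (g := fun Z => deriv ψ' Z * deriv w Z) ((hgc'.mul hwdc).intervalIntegrable 0 1)
          ((hψ'dc.mul hwdc).intervalIntegrable 0 1)]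
        apply intervalIntegral.integral_congr
        intro Z _
        simp only [hwd]
        ring
      have s2 : ∫ Z in (0:ℝ)..1, Z * deriv w Z * w Z
          = (∫ Z in (0:ℝ)..1, Z * deriv ψ Z * w Z)
            - ∫ Z in (0:ℝ)..1, Z * deriv ψ' Z * w Z := by
        have hA : IntervalIntegrable (fun Z : ℝ => Z * deriv ψ Z * w Z) volume 0 1 := by
          apply Continuous.intervalIntegrable
          exact (continuous_id.mul hgc').mul hwc
        have hB : IntervalIntegrable (fun Z : ℝ => Z * deriv ψ' Z * w Z) volume 0 1 := by
          apply Continuous.intervalIntegrable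
          exact (continuous_id.mul hψ'dc).mul hwc
        rw [← intervalIntegral.integral_sub hA hB]
        apply intervalIntegral.integral_congr
        intro Z _
        simp only [hwd]
        ring
      rw [s1, s2]
      linarith
    have hco := coercive M hM0 w hwC1 hw1
    rw [azero] at hco
    have hInn : (0:ℝ) ≤ ∫ Z in (0:ℝ)..1, (deriv w Z)^2 :=
      intervalIntegral.integral_nonneg zero_le_one (fun x _ => sq_nonneg _)
    have hIzero : ∫ Z in (0:ℝ)..1, (deriv w Z)^2 = 0 := by nlinarith
    intro Z hZ
    have hp := poincare_pt w hwC1 hw1 hZ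
    rw [hIzero] at hp
    have hw0 : w Z = 0 := by nlinarith [sq_nonneg (w Z)]
    have : ψ Z - ψ' Z = 0 := hw0
    linarith
end

section
/- Let 0 ≤ M < 2, R_c > 0, N > 0, β ≥ 0, s₁ ∈ ℝ, h₁ ∈ C([0,1]) positive, and u ∈ V_Z. The weak solution w ∈ V_Z of −R_c w″ + R_c M Z w′ + 4N²h₁² w = 2N²h₁ u′ on (0,1) with w(1) = 0 and R_c w′(0) = −2N²h₁β(u(0) − s₁) satisfies the estimate (∫₀¹ (w′)²)^{1/2} ≤ (2N²/(R_c(1 − M/2))) h₁ [ (∫₀¹ (u′)²)^{1/2} + β|u(0) − s₁| ]. -/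
/-!
Test the equation against `w` and integrate by parts on `[0, 1]`, using `w 1 = 0` and the
boundary condition at `0`:
`Rc ∫ w'² - (Rc M / 2) ∫ w² + 4 N² h₁² ∫ w² = 2 N² h₁ ∫ u' w + 2 N² h₁ β (u 0 - s₁) w 0`,
where the drift term was rewritten via `∫ Z w w' = -½ ∫ w²`. Since `w 1 = 0`, the fundamental
theorem of calculus and Cauchy–Schwarz give `|w z| ≤ ‖w'‖` on `[0, 1]`, hence `‖w‖ ≤ ‖w'‖` and
`|w 0| ≤ ‖w'‖`. The left side is therefore at least `Rc (1 - M/2) ‖w'‖²`, the right side at most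
`2 N² h₁ (‖u'‖ + β |u 0 - s₁|) ‖w'‖`, and dividing by `‖w'‖` gives the estimate.
-/

open intervalIntegral Set
open MeasureTheory (volume)

theorem sq_integral_mul_le_integral_sq_mul_integral_sq {f g : ℝ → ℝ} {a b : ℝ} (hab : a ≤ b)
    (hf : IntervalIntegrable (fun x ↦ f x ^ 2) volume a b)
    (hg : IntervalIntegrable (fun x ↦ g x ^ 2) volume a b)
    (hfg : IntervalIntegrable (fun x ↦ f x * g x) volume a b) :
    (∫ x in a..b, f x * g x) ^ 2 ≤ (∫ x in a..b, f x ^ 2) * ∫ x in a..b, g x ^ 2 := by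
  -- the quadratic `t ↦ ∫ (t g + f)²` is nonnegative, so its discriminant is nonpositive
  have hquad : ∀ t : ℝ, 0 ≤ (∫ x in a..b, g x ^ 2) * (t * t)
      + (2 * ∫ x in a..b, f x * g x) * t + ∫ x in a..b, f x ^ 2 := by
    intro t
    have hexpand : ∫ x in a..b, (t * g x + f x) ^ 2 = (∫ x in a..b, g x ^ 2) * (t * t)
        + (2 * ∫ x in a..b, f x * g x) * t + ∫ x in a..b, f x ^ 2 := by
      have hpt : ∀ x, (t * g x + f x) ^ 2 = t * t * g x ^ 2 + 2 * t * (f x * g x) + f x ^ 2 :=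
        fun x ↦ by ring
      simp only [hpt]
      rw [integral_add ((hg.const_mul _).add (hfg.const_mul _)) hf,
        integral_add (hg.const_mul _) (hfg.const_mul _), integral_const_mul, integral_const_mul]
      ring
    exact hexpand ▸ integral_nonneg hab fun x _ ↦ sq_nonneg _
  have hdiscr := discrim_le_zero hquad
  rw [discrim] at hdiscr
  linarith

theorem integral_mul_le_sqrt_mul_sqrt {f g : ℝ → ℝ} {a b : ℝ} (hab : a ≤ b)
    (hf : IntervalIntegrable (fun x ↦ f x ^ 2) volume a b)
    (hg : IntervalIntegrable (fun x ↦ g x ^ 2) volume a b)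
    (hfg : IntervalIntegrable (fun x ↦ f x * g x) volume a b) :
    ∫ x in a..b, f x * g x ≤ √(∫ x in a..b, f x ^ 2) * √(∫ x in a..b, g x ^ 2) :=
  calc _ ≤ |∫ x in a..b, f x * g x| := le_abs_self _
    _ ≤ √((∫ x in a..b, f x ^ 2) * ∫ x in a..b, g x ^ 2) :=
        Real.abs_le_sqrt (sq_integral_mul_le_integral_sq_mul_integral_sq hab hf hg hfg)
    _ = _ := Real.sqrt_mul (integral_nonneg hab fun _ _ ↦ sq_nonneg _) _

theorem sq_le_mul_integral_deriv_sq {w : ℝ → ℝ} {a b z : ℝ} (hw : ContDiff ℝ 1 w)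
    (hwb : w b = 0) (hz : z ∈ Icc a b) :
    w z ^ 2 ≤ (b - a) * ∫ x in a..b, deriv w x ^ 2 := by
  have hw' : Continuous (deriv w) := hw.continuous_deriv_one
  have hftc : w z = -∫ x in z..b, deriv w x := by
    rw [integral_deriv_eq_sub (fun x _ ↦ (hw.differentiable one_ne_zero x))
      (hw'.intervalIntegrable z b), hwb]
    ring
  have hL1 : |∫ x in z..b, deriv w x| ≤ ∫ x in a..b, |deriv w x| :=
    (abs_integral_le_integral_abs hz.2).trans <|
      integral_mono_interval hz.1 hz.2 le_rfl (Filter.Eventually.of_forall fun x ↦ abs_nonneg _)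
        (hw'.abs.intervalIntegrable a b)
  calc w z ^ 2 = |∫ x in z..b, deriv w x| ^ 2 := by rw [hftc, sq_abs, neg_sq]
    _ ≤ (∫ x in a..b, |deriv w x| * 1) ^ 2 := by
        simp only [mul_one]
        exact pow_le_pow_left₀ (abs_nonneg _) hL1 2
    _ ≤ (∫ x in a..b, |deriv w x| ^ 2) * ∫ x in a..b, (1 : ℝ) ^ 2 :=
        sq_integral_mul_le_integral_sq_mul_integral_sq (hz.1.trans hz.2)
          ((hw'.abs.pow 2).intervalIntegrable a b) intervalIntegrable_const
          ((hw'.abs.mul continuous_const).intervalIntegrable a b)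
    _ = (b - a) * ∫ x in a..b, deriv w x ^ 2 := by
        rw [integral_const]
        simp only [sq_abs, one_pow, smul_eq_mul, mul_one, mul_comm]

theorem integral_sq_le_sq_mul_integral_deriv_sq {w : ℝ → ℝ} {a b : ℝ} (hw : ContDiff ℝ 1 w)
    (hwb : w b = 0) (hab : a ≤ b) :
    ∫ x in a..b, w x ^ 2 ≤ (b - a) ^ 2 * ∫ x in a..b, deriv w x ^ 2 := by
  calc ∫ x in a..b, w x ^ 2 ≤ ∫ _ in a..b, (b - a) * ∫ x in a..b, deriv w x ^ 2 :=
        integral_mono_on hab ((hw.continuous.pow 2).intervalIntegrable a b)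
          intervalIntegrable_const fun z hz ↦ sq_le_mul_integral_deriv_sq hw hwb hz
    _ = (b - a) ^ 2 * ∫ x in a..b, deriv w x ^ 2 := by rw [integral_const, smul_eq_mul]; ring

theorem integral_mul_deriv_deriv {w : ℝ → ℝ} {a b : ℝ} (hw : ContDiff ℝ 2 w) :
    ∫ x in a..b, w x * deriv (deriv w) x
      = w b * deriv w b - w a * deriv w a - ∫ x in a..b, deriv w x ^ 2 := by
  have hw' : ContDiff ℝ 1 (deriv w) := hw.deriv'
  simp only [sq]
  exact integral_mul_deriv_eq_deriv_mul
    (fun x _ ↦ (hw.differentiable two_ne_zero x).hasDerivAt)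
    (fun x _ ↦ (hw'.differentiable one_ne_zero x).hasDerivAt)
    (hw'.continuous.intervalIntegrable a b) (hw'.continuous_deriv_one.intervalIntegrable a b)

theorem integral_id_mul_mul_deriv {w : ℝ → ℝ} {a b : ℝ} (hw : ContDiff ℝ 1 w) :
    ∫ x in a..b, x * (w x * deriv w x)
      = (b * w b ^ 2 - a * w a ^ 2 - ∫ x in a..b, w x ^ 2) / 2 := by
  have hw' : Continuous (deriv w) := hw.continuous_deriv_one
  have hibp := integral_mul_deriv_eq_deriv_mul (a := a) (b := b) (u := id)
    (v := fun x ↦ w x * w x)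
    (u' := fun _ ↦ 1) (v' := fun x ↦ deriv w x * w x + w x * deriv w x)
    (fun x _ ↦ hasDerivAt_id x)
    (fun x _ ↦ (hw.differentiable one_ne_zero x).hasDerivAt.mul
      (hw.differentiable one_ne_zero x).hasDerivAt)
    intervalIntegrable_const
    (((hw'.mul hw.continuous).add (hw.continuous.mul hw')).intervalIntegrable a b)
  have htwice : ∫ x in a..b, x * (deriv w x * w x + w x * deriv w x)
      = 2 * ∫ x in a..b, x * (w x * deriv w x) := by
    rw [← integral_const_mul]
    congr 1 with x
    ring
  simp only [id, one_mul] at hibp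
  rw [htwice] at hibp
  simp only [sq]
  linarith

theorem le_div_of_mul_sq_le_mul {c K L : ℝ} (hc : 0 < c) (hK : 0 ≤ K) (hL : 0 ≤ L)
    (h : c * L ^ 2 ≤ K * L) : L ≤ K / c := by
  rw [le_div_iff₀ hc]
  rcases hL.eq_or_lt with rfl | hL
  · simpa using hK
  · nlinarith

theorem integral_deriv_sq_eq_of_ode {Rc M k : ℝ} {f w : ℝ → ℝ} (hw : ContDiff ℝ 2 w)
    (hw1 : w 1 = 0)
    (hode : ∀ Z ∈ Ioo (0 : ℝ) 1,
      -Rc * deriv (deriv w) Z + Rc * M * Z * deriv w Z + k * w Z = f Z) :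
    Rc * (∫ Z in (0 : ℝ)..1, deriv w Z ^ 2) - Rc * M / 2 * (∫ Z in (0 : ℝ)..1, w Z ^ 2)
        + k * ∫ Z in (0 : ℝ)..1, w Z ^ 2
      = (∫ Z in (0 : ℝ)..1, f Z * w Z) - Rc * deriv w 0 * w 0 := by
  have hw1' : ContDiff ℝ 1 w := hw.of_le one_le_two
  have hwc : Continuous w := hw.continuous
  have hw'c : Continuous (deriv w) := hw.continuous_deriv one_le_two
  have hw''c : Continuous (deriv (deriv w)) := (hw.iterate_deriv' 0 2).continuous
  have htested : ∫ Z in (0 : ℝ)..1,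
      (-Rc * deriv (deriv w) Z + Rc * M * Z * deriv w Z + k * w Z) * w Z
        = ∫ Z in (0 : ℝ)..1, f Z * w Z := by
    refine integral_congr_ae (Filter.Eventually.of_forall fun Z hZ ↦ ?_)
    rw [uIoc_of_le zero_le_one] at hZ
    rcases hZ.2.eq_or_lt with rfl | hZ1
    · simp [hw1]
    · rw [hode Z ⟨hZ.1, hZ1⟩]
  have hexpand : ∀ Z, (-Rc * deriv (deriv w) Z + Rc * M * Z * deriv w Z + k * w Z) * w Z
      = -Rc * (w Z * deriv (deriv w) Z) + Rc * M * (Z * (w Z * deriv w Z)) + k * w Z ^ 2 :=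
    fun Z ↦ by ring
  simp only [hexpand] at htested
  rw [integral_add, integral_add, integral_const_mul, integral_const_mul, integral_const_mul,
    integral_mul_deriv_deriv hw, integral_id_mul_mul_deriv hw1', hw1] at htested
  · linarith
  all_goals exact Continuous.intervalIntegrable (by fun_prop) 0 1

theorem mul_integral_deriv_sq_le_of_ode {Rc M k : ℝ} {f w : ℝ → ℝ} (hRc : 0 ≤ Rc) (hM : 0 ≤ M)
    (hk : 0 ≤ k) (hw : ContDiff ℝ 2 w) (hw1 : w 1 = 0)
    (hode : ∀ Z ∈ Ioo (0 : ℝ) 1,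
      -Rc * deriv (deriv w) Z + Rc * M * Z * deriv w Z + k * w Z = f Z) :
    Rc * (1 - M / 2) * ∫ Z in (0 : ℝ)..1, deriv w Z ^ 2
      ≤ (∫ Z in (0 : ℝ)..1, f Z * w Z) - Rc * deriv w 0 * w 0 := by
  have hpoincare : ∫ Z in (0 : ℝ)..1, w Z ^ 2 ≤ ∫ Z in (0 : ℝ)..1, deriv w Z ^ 2 := by
    simpa using integral_sq_le_sq_mul_integral_deriv_sq (hw.of_le one_le_two) hw1 zero_le_one
  have hdrift : 0 ≤ Rc * M / 2 * ((∫ Z in (0 : ℝ)..1, deriv w Z ^ 2) - ∫ Z in (0 : ℝ)..1, w Z ^ 2) :=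
    mul_nonneg (by positivity) (sub_nonneg.2 hpoincare)
  have hreaction : 0 ≤ k * ∫ Z in (0 : ℝ)..1, w Z ^ 2 :=
    mul_nonneg hk (integral_nonneg zero_le_one fun _ _ ↦ sq_nonneg _)
  linarith [integral_deriv_sq_eq_of_ode hw hw1 hode]

theorem microrotation_estimate_general (M Rc N β s₁ h₁ : ℝ)
    (hM0 : 0 ≤ M) (hM2 : M < 2) (hRc : 0 < Rc) (hβ : 0 ≤ β)
    (hh₁ : 0 < h₁)
    (u w : ℝ → ℝ) (hu : ContDiff ℝ 1 u)
    (hw : ContDiff ℝ 2 w) (hw1 : w 1 = 0)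
    (hode : ∀ Z ∈ Set.Ioo (0:ℝ) 1,
      -Rc * deriv (deriv w) Z + Rc * M * Z * deriv w Z + 4 * N^2 * h₁^2 * w Z
        = 2 * N^2 * h₁ * deriv u Z)
    (hbc : Rc * deriv w 0 = -(2 * N^2 * h₁ * β * (u 0 - s₁))) :
    Real.sqrt (∫ Z in (0:ℝ)..1, (deriv w Z)^2)
      ≤ (2 * N^2 / (Rc * (1 - M/2))) * h₁
          * (Real.sqrt (∫ Z in (0:ℝ)..1, (deriv u Z)^2) + β * |u 0 - s₁|) := by
  set A := ∫ Z in (0:ℝ)..1, deriv w Z ^ 2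
  set S := √(∫ Z in (0:ℝ)..1, deriv u Z ^ 2)
  have hw1' : ContDiff ℝ 1 w := hw.of_le one_le_two
  have hu' : Continuous (deriv u) := hu.continuous_deriv_one
  have hw0 : |w 0| ≤ √A := Real.abs_le_sqrt <| by
    simpa using sq_le_mul_integral_deriv_sq hw1' hw1 (left_mem_Icc.2 zero_le_one)
  have hCS : ∫ Z in (0:ℝ)..1, deriv u Z * w Z ≤ S * √A :=
    (integral_mul_le_sqrt_mul_sqrt zero_le_one ((hu'.pow 2).intervalIntegrable 0 1)
      ((hw.continuous.pow 2).intervalIntegrable 0 1)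
      ((hu'.mul hw.continuous).intervalIntegrable 0 1)).trans <|
    mul_le_mul_of_nonneg_left (Real.sqrt_le_sqrt <| by
      simpa using integral_sq_le_sq_mul_integral_deriv_sq hw1' hw1 zero_le_one) (Real.sqrt_nonneg _)
  have hboundary : (u 0 - s₁) * w 0 ≤ |u 0 - s₁| * √A :=
    (le_abs_self _).trans ((abs_mul _ _).trans_le (by gcongr))
  have henergy := mul_integral_deriv_sq_le_of_ode hRc.le hM0 (by positivity) hw hw1 hode
  simp only [mul_assoc (2 * N ^ 2 * h₁), integral_const_mul] at henergy
  have hK : 0 ≤ 2 * N ^ 2 * h₁ := by positivity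
  have hcoercive : Rc * (1 - M / 2) * √A ^ 2 ≤ 2 * N ^ 2 * h₁ * (S + β * |u 0 - s₁|) * √A := by
    rw [Real.sq_sqrt (integral_nonneg zero_le_one fun _ _ ↦ sq_nonneg _)]
    have hwall : Rc * deriv w 0 * w 0 = -(2 * N ^ 2 * h₁ * β * ((u 0 - s₁) * w 0)) := by
      rw [hbc]; ring
    linarith [mul_le_mul_of_nonneg_left hCS hK,
      mul_le_mul_of_nonneg_left hboundary (mul_nonneg hK hβ)]
  calc √A ≤ 2 * N ^ 2 * h₁ * (S + β * |u 0 - s₁|) / (Rc * (1 - M / 2)) :=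
        le_div_of_mul_sq_le_mul (mul_pos hRc (by linarith)) (by positivity) (Real.sqrt_nonneg _)
          hcoercive
    _ = _ := by ring

/-- Estimate for the microrotation equation: if w solves
    −R_c w'' + R_c M Z w' + 4N²h₁² w = 2N²h₁ u' on (0,1) with w(1) = 0 and
    R_c w'(0) = −2N²h₁β(u(0) − s₁), then
    ‖w'‖_{L²} ≤ (2N²/(R_c(1 − M/2))) h₁ (‖u'‖_{L²} + β|u(0) − s₁|). -/
theorem microrotation_estimate (M Rc N β s₁ h₁ : ℝ)
    (hM0 : 0 ≤ M) (hM2 : M < 2) (hRc : 0 < Rc) (hN : 0 < N) (hβ : 0 ≤ β)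
    (hh₁ : 0 < h₁)
    (u w : ℝ → ℝ) (hu : ContDiff ℝ 1 u) (hu1 : u 1 = 0)
    (hw : ContDiff ℝ 2 w) (hw1 : w 1 = 0)
    (hode : ∀ Z ∈ Set.Ioo (0:ℝ) 1,
      -Rc * deriv (deriv w) Z + Rc * M * Z * deriv w Z + 4 * N^2 * h₁^2 * w Z
        = 2 * N^2 * h₁ * deriv u Z)
    (hbc : Rc * deriv w 0 = -(2 * N^2 * h₁ * β * (u 0 - s₁))) :
    Real.sqrt (∫ Z in (0:ℝ)..1, (deriv w Z)^2)
      ≤ (2 * N^2 / (Rc * (1 - M/2))) * h₁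
          * (Real.sqrt (∫ Z in (0:ℝ)..1, (deriv u Z)^2) + β * |u 0 - s₁|) :=
  microrotation_estimate_general M Rc N β s₁ h₁ hM0 hM2 hRc hβ hh₁ u w hu hw hw1 hode hbc
end
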